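/- arXiv:2402.00503 — 8 statements merged into one kernel-verified Lean document; each statement's English description precedes it below -/
import Mathlib

section
/- Let A be a C*-algebra. There exists a bijective bounded linear map ψ : A → A satisfying ψ(a b) = ψ(b) ψ(a) and ψ(a*) = ψ(a)* for all a, b ∈ A (i.e. A is self-opposite as a C*-algebra) if and only if there exists a bijective bounded linear map φ : A → A satisfying φ(a b* c) = φ(c) φ(b)* φ(a) for all a, b, c ∈ A (i.e. A is self-opposite as a TRO). -/
/-!
Given a TRO anti-automorphism `φ`, the identity `φ (a * star b * c) = φ c * (star (φ b) * φ a)`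
shows that left multiplication by `a * star b` is carried by `φ` to right multiplication by
`star (φ b) * φ a`. Since the products `a * star b` span a C⋆-algebra, every `x` gets a unique
`ψ x` with `φ (x * c) = φ c * ψ x` for all `c` (uniqueness because `φ` is onto and
`z ↦ z * y` determines `y` in a C⋆-algebra). This `ψ` is linear, continuous by the closed
graph theorem, anti-multiplicative by associativity, `*`-preserving and bijective.
-/

open Function

def IsTROAntiHom {A : Type*} [Mul A] [Star A] (φ : A → A) : Prop :=
  ∀ a b c : A, φ (a * star b * c) = φ c * star (φ b) * φ a

theorem CStarRing.eq_of_forall_mul_eq {E : Type*} [NonUnitalNormedRing E] [StarRing E]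
    [CStarRing E] {y y' : E} (h : ∀ z : E, z * y = z * y') : y = y' := by
  rw [← sub_eq_zero, ← CStarRing.star_mul_self_eq_zero_iff, mul_sub, h, sub_self]

namespace CStarAlgebra

variable {A : Type*} [NonUnitalCStarAlgebra A]

theorem span_mul_star_eq_top : Submodule.span ℂ {x : A | ∃ a b : A, x = a * star b} = ⊤ := by
  let _ := CStarAlgebra.spectralOrder A
  let _ := CStarAlgebra.spectralOrderedRing A
  refine eq_top_iff.mpr <| (span_nonneg (A := A)).ge.trans (Submodule.span_mono ?_)
  intro x hx
  obtain ⟨b, rfl⟩ := nonneg_iff_eq_mul_star_self.mp (show 0 ≤ x from hx)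
  exact ⟨b, b, rfl⟩

@[elab_as_elim]
theorem induction_on_mul_star {p : A → Prop} (mul_star : ∀ a b : A, p (a * star b))
    (zero : p 0) (add : ∀ x y : A, p x → p y → p (x + y))
    (smul : ∀ (c : ℂ) (x : A), p x → p (c • x)) (x : A) : p x :=
  Submodule.span_induction (p := fun x _ ↦ p x) (by rintro _ ⟨a, b, rfl⟩; exact mul_star a b)
    zero (fun x y _ _ ↦ add x y) (fun c x _ ↦ smul c x)
    (span_mul_star_eq_top (A := A) ▸ Submodule.mem_top)

end CStarAlgebra

namespace IsTROAntiHom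

variable {A : Type*} [NonUnitalCStarAlgebra A] {φ : A →L[ℂ] A}

theorem exists_map_mul_eq (h : IsTROAntiHom φ) (x : A) :
    ∃ y : A, ∀ c : A, φ (x * c) = φ c * y := by
  induction x using CStarAlgebra.induction_on_mul_star with
  | mul_star a b => exact ⟨star (φ b) * φ a, fun c ↦ by rw [h, mul_assoc]⟩
  | zero => exact ⟨0, fun c ↦ by rw [zero_mul, map_zero, mul_zero]⟩
  | add x x' hx hx' =>
    obtain ⟨y, hy⟩ := hx
    obtain ⟨y', hy'⟩ := hx'
    exact ⟨y + y', fun c ↦ by rw [add_mul, map_add, hy, hy', mul_add]⟩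
  | smul m x hx =>
    obtain ⟨y, hy⟩ := hx
    exact ⟨m • y, fun c ↦ by rw [smul_mul_assoc, map_smul, hy, mul_smul_comm]⟩

noncomputable def antiHomFun (h : IsTROAntiHom φ) (x : A) : A :=
  (h.exists_map_mul_eq x).choose

theorem map_mul_eq_mul_antiHomFun (h : IsTROAntiHom φ) (x c : A) :
    φ (x * c) = φ c * h.antiHomFun x :=
  (h.exists_map_mul_eq x).choose_spec c

theorem antiHomFun_eq (h : IsTROAntiHom φ) (hφ : Surjective φ) {x y : A}
    (hy : ∀ c : A, φ (x * c) = φ c * y) : h.antiHomFun x = y :=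
  CStarRing.eq_of_forall_mul_eq <| hφ.forall.2 fun c ↦ by rw [← hy, map_mul_eq_mul_antiHomFun]

noncomputable def antiHom (h : IsTROAntiHom φ) (hφ : Surjective φ) : A →L[ℂ] A :=
  .ofSeqClosedGraph (g :=
    { toFun := h.antiHomFun
      map_add' := fun x x' ↦ h.antiHomFun_eq hφ fun c ↦ by
        rw [add_mul, map_add, map_mul_eq_mul_antiHomFun, map_mul_eq_mul_antiHomFun, mul_add]
      map_smul' := fun m x ↦ h.antiHomFun_eq hφ fun c ↦ by
        rw [smul_mul_assoc, map_smul, map_mul_eq_mul_antiHomFun, RingHom.id_apply,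
          mul_smul_comm] })
    fun u x y hu hψu ↦ (h.antiHomFun_eq hφ fun c ↦ tendsto_nhds_unique
      ((φ.continuous.tendsto _).comp (hu.mul_const c))
      (by simpa only [comp_def, h.map_mul_eq_mul_antiHomFun, LinearMap.coe_mk,
        AddHom.coe_mk] using hψu.const_mul (φ c))).symm

theorem map_mul_eq_mul_antiHom (h : IsTROAntiHom φ) (hφ : Surjective φ) (x c : A) :
    φ (x * c) = φ c * h.antiHom hφ x :=
  h.map_mul_eq_mul_antiHomFun x c

theorem antiHom_eq (h : IsTROAntiHom φ) (hφ : Surjective φ) {x y : A}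
    (hy : ∀ c : A, φ (x * c) = φ c * y) : h.antiHom hφ x = y :=
  h.antiHomFun_eq hφ hy

theorem antiHom_mul_star (h : IsTROAntiHom φ) (hφ : Surjective φ) (a b : A) :
    h.antiHom hφ (a * star b) = star (φ b) * φ a :=
  h.antiHom_eq hφ fun c ↦ by rw [h, mul_assoc]

theorem antiHom_mul (h : IsTROAntiHom φ) (hφ : Surjective φ) (x x' : A) :
    h.antiHom hφ (x * x') = h.antiHom hφ x' * h.antiHom hφ x :=
  h.antiHom_eq hφ fun c ↦ by
    rw [mul_assoc, map_mul_eq_mul_antiHom, map_mul_eq_mul_antiHom, mul_assoc]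

theorem antiHom_star (h : IsTROAntiHom φ) (hφ : Surjective φ) (x : A) :
    h.antiHom hφ (star x) = star (h.antiHom hφ x) := by
  induction x using CStarAlgebra.induction_on_mul_star with
  | mul_star a b =>
    rw [star_mul, star_star, antiHom_mul_star, antiHom_mul_star, star_mul, star_star]
  | zero => rw [star_zero, map_zero, star_zero]
  | add x x' hx hx' => rw [star_add, map_add, hx, hx', map_add, star_add]
  | smul m x hx => rw [star_smul, map_smul, hx, map_smul, star_smul]

theorem antiHom_injective (h : IsTROAntiHom φ) (hφ : Bijective φ) :
    Injective (h.antiHom hφ.2) := by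
  refine (injective_iff_map_eq_zero _).2 fun x hx ↦ ?_
  have hxc : ∀ c : A, x * c = 0 := fun c ↦
    hφ.1 <| by rw [map_mul_eq_mul_antiHom h hφ.2, hx, mul_zero, map_zero]
  exact (CStarRing.mul_star_self_eq_zero_iff x).1 (hxc _)

theorem antiHom_surjective (h : IsTROAntiHom φ) (hφ : Surjective φ) :
    Surjective (h.antiHom hφ) := by
  intro x
  induction x using CStarAlgebra.induction_on_mul_star with
  | mul_star a b =>
    obtain ⟨a', ha'⟩ := hφ (star a)
    obtain ⟨b', hb'⟩ := hφ (star b)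
    exact ⟨b' * star a', by rw [antiHom_mul_star, ha', hb', star_star]⟩
  | zero => exact ⟨0, map_zero _⟩
  | add x x' hx hx' =>
    obtain ⟨u, rfl⟩ := hx
    obtain ⟨u', rfl⟩ := hx'
    exact ⟨u + u', map_add _ u u'⟩
  | smul m x hx =>
    obtain ⟨u, rfl⟩ := hx
    exact ⟨m • u, map_smul _ m u⟩

end IsTROAntiHom

/-- A C*-algebra `A` is self-opposite as a C*-algebra (there is a
bijective bounded linear `*`-anti-automorphism) if and only if it is self-opposite
as a TRO (there is a bijective bounded linear TRO anti-automorphism). -/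
theorem selfOpposite_cstar_iff_selfOpposite_tro
    {A : Type*} [NonUnitalCStarAlgebra A] :
    (∃ ψ : A →L[ℂ] A, Function.Bijective ψ ∧
        (∀ a b : A, ψ (a * b) = ψ b * ψ a) ∧ (∀ a : A, ψ (star a) = star (ψ a))) ↔
    (∃ φ : A →L[ℂ] A, Function.Bijective φ ∧
        ∀ a b c : A, φ (a * star b * c) = φ c * star (φ b) * φ a) := by
  constructor
  · rintro ⟨ψ, hψ, hmul, hstar⟩
    exact ⟨ψ, hψ, fun a b c ↦ by rw [hmul, hmul, hstar, mul_assoc]⟩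
  · rintro ⟨φ, hφ, htro⟩
    have h : IsTROAntiHom φ := htro
    exact ⟨h.antiHom hφ.2, ⟨h.antiHom_injective hφ, h.antiHom_surjective hφ.2⟩,
      h.antiHom_mul hφ.2, h.antiHom_star hφ.2⟩
end

section
/- Let S : A → B be a linear map between C*-algebras. Then the 2-nd amplification S_2 : M_2(A) → M_2(B) is a Jordan homomorphism (i.e. S_2(x ∘ y) = S_2(x) ∘ S_2(y) for all x, y ∈ M_2(A), where x ∘ y = (xy + yx)/2) if and only if S is multiplicative, i.e. S(ab) = S(a)S(b) for all a, b ∈ A. -/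
/-! If `S` is multiplicative then so is every amplification `S_n`, hence `S_n` preserves any
symmetrised product. Conversely, testing the Jordan identity of `S_2` on the matrix units
`a e₁₂` and `b e₂₁` gives `S (a * b) / 2` in the `(1, 1)` entry on the left and `S a * S b / 2`
on the right, since `e₂₁ e₁₂` has vanishing `(1, 1)` entry. -/

open Matrix

namespace LinearMap

variable {R A B : Type*} [CommSemiring R]
  [NonUnitalNonAssocSemiring A] [Module R A] [NonUnitalNonAssocSemiring B] [Module R B]

theorem matrix_map_mul_of_map_mul {l m n : Type*} [Fintype m] (S : A →ₗ[R] B)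
    (hS : ∀ a b : A, S (a * b) = S a * S b) (x : Matrix l m A) (y : Matrix m n A) :
    (x * y).map S = x.map S * y.map S :=
  Matrix.map_mul (f := ({ S with map_zero' := S.map_zero, map_mul' := hS } : A →ₙₐ[R] B))

theorem matrix_map_jordan_of_map_mul {n : Type*} [Fintype n] (S : A →ₗ[R] B)
    (hS : ∀ a b : A, S (a * b) = S a * S b) (c : R) (x y : Matrix n n A) :
    (c • (x * y + y * x)).map S = c • (x.map S * y.map S + y.map S * x.map S) := by
  rw [Matrix.map_smul _ c (S.map_smul c), Matrix.map_add _ S.map_add,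
    S.matrix_map_mul_of_map_mul hS, S.matrix_map_mul_of_map_mul hS]

theorem map_mul_of_matrix_map_jordan {n : Type*} [Fintype n] [DecidableEq n] {i j : n}
    (hij : i ≠ j) (S : A →ₗ[R] B) {c : R} (hc : IsUnit c)
    (hS : ∀ x y : Matrix n n A,
      (c • (x * y + y * x)).map S = c • (x.map S * y.map S + y.map S * x.map S))
    (a b : A) : S (a * b) = S a * S b := by
  have hii := congrFun₂ (hS (Matrix.single i j a) (Matrix.single j i b)) i i
  simp only [single_mul_single_same, map_single, Matrix.smul_apply, Matrix.add_apply, map_apply,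
    map_smul, single_apply_same, single_apply_of_row_ne hij.symm, add_zero] at hii
  exact hc.smul_left_cancel.mp hii

end LinearMap

/-- For a linear map `S : A → B` between C*-algebras, the second
amplification `S₂ : M₂(A) → M₂(B)` is a Jordan homomorphism (for the Jordan product
`x ∘ y = (xy + yx)/2`) if and only if `S` is multiplicative. -/
theorem amplification_two_jordanHom_iff_multiplicative
    {A B : Type*} [NonUnitalCStarAlgebra A] [NonUnitalCStarAlgebra B]
    (S : A →ₗ[ℂ] B) :
    (∀ x y : Matrix (Fin 2) (Fin 2) A,
        ((2⁻¹ : ℂ) • (x * y + y * x)).map ⇑S =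
          (2⁻¹ : ℂ) • (x.map ⇑S * y.map ⇑S + y.map ⇑S * x.map ⇑S)) ↔
    (∀ a b : A, S (a * b) = S a * S b) :=
  ⟨S.map_mul_of_matrix_map_jordan (i := 0) (j := 1) Fin.zero_ne_one
      (isUnit_iff_ne_zero.mpr (by norm_num)),
    fun hS => S.matrix_map_jordan_of_map_mul hS _⟩
end

section
/- Let S : A → B be a linear map between C*-algebras. Then: (a) the 2-nd amplification S_2 : M_2(A) → M_2(B) is a triple homomorphism (i.e. S_2({x,y,z}) = {S_2(x), S_2(y), S_2(z)} for all x, y, z ∈ M_2(A)) if and only if S is a TRO homomorphism; (b) if S is a TRO homomorphism then S_n : M_n(A) → M_n(B) is a TRO homomorphism for every n ≥ 1. -/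
section Aux

variable {A B : Type*} [NonUnitalCStarAlgebra A] [NonUnitalCStarAlgebra B]
  (S : A →ₗ[ℂ] B)

lemma tro_amplification (h : ∀ a b c : A, S (a * star b * c) = S a * star (S b) * S c)
    {n : Type*} [Fintype n] (x y z : Matrix n n A) :
    (x * star y * z).map ⇑S = x.map ⇑S * star (y.map ⇑S) * z.map ⇑S := by
  ext i j
  simp only [Matrix.map_apply, Matrix.mul_apply, Matrix.star_apply, Finset.sum_mul,
    Finset.mul_sum, map_sum]
  refine Finset.sum_congr rfl fun l _ => Finset.sum_congr rfl fun k _ => ?_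
  exact h _ _ _

end Aux

/-- For a linear map `S : A → B` between C*-algebras:
(a) the second amplification `S₂ : M₂(A) → M₂(B)` is a triple homomorphism (for the
triple product `{x,y,z} = (x y* z + z y* x)/2`) if and only if `S` is a TRO
homomorphism; (b) if `S` is a TRO homomorphism then so is every amplification `Sₙ`. -/
theorem amplification_two_tripleHom_iff_troHom_and_amplification_troHom
    {A B : Type*} [NonUnitalCStarAlgebra A] [NonUnitalCStarAlgebra B]
    (S : A →ₗ[ℂ] B) :
    ((∀ x y z : Matrix (Fin 2) (Fin 2) A,
        ((2⁻¹ : ℂ) • (x * star y * z + z * star y * x)).map ⇑S =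
          (2⁻¹ : ℂ) • (x.map ⇑S * star (y.map ⇑S) * z.map ⇑S +
            z.map ⇑S * star (y.map ⇑S) * x.map ⇑S)) ↔
      (∀ a b c : A, S (a * star b * c) = S a * star (S b) * S c)) ∧
    ((∀ a b c : A, S (a * star b * c) = S a * star (S b) * S c) →
      ∀ (n : ℕ), 1 ≤ n → ∀ x y z : Matrix (Fin n) (Fin n) A,
        (x * star y * z).map ⇑S = x.map ⇑S * star (y.map ⇑S) * z.map ⇑S) := by
  constructor
  · constructor
    · intro h2 a b c
      have := congrFun (congrFun (h2 !![a, 0; 0, 0] !![0, 0; b, 0] !![0, 0; 0, c]) 0) 1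
      simp only [Matrix.map_apply, Matrix.smul_apply, Matrix.add_apply, Matrix.mul_apply,
        Matrix.star_apply, Fin.sum_univ_two, Matrix.of_apply, Matrix.cons_val', Matrix.cons_val_zero,
        Matrix.cons_val_one, Matrix.head_cons, Matrix.head_fin_const, Matrix.empty_val',
        Matrix.cons_val_fin_one, star_zero, mul_zero, zero_mul, add_zero, zero_add,
        map_smul, map_zero] at this
      exact smul_right_injective B (by norm_num : (2⁻¹ : ℂ) ≠ 0) this
    · intro h x y z
      have h1 := tro_amplification S h x y z
      have h2 := tro_amplification S h z y x
      ext i j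
      simp only [Matrix.map_apply, Matrix.smul_apply, Matrix.add_apply, map_smul, map_add]
      rw [show S ((x * star y * z) i j) = ((x * star y * z).map ⇑S) i j from rfl,
        show S ((z * star y * x) i j) = ((z * star y * x).map ⇑S) i j from rfl, h1, h2]
  · intro h n _ x y z
    exact tro_amplification S h x y z
end

section
/- Let S : A → B be a bounded linear triple homomorphism between C*-algebras. Then S is a TRO homomorphism if and only if S is 2-orthogonality preserving, i.e. the amplification S_2 : M_2(A) → M_2(B) maps orthogonal pairs to orthogonal pairs. -/
namespace TripleHomAux

variable {A B : Type*} [NonUnitalCStarAlgebra A] [NonUnitalCStarAlgebra B]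

/-- The defect of `S` from being a TRO homomorphism. -/
noncomputable def F (S : A →L[ℂ] B) (a b c : A) : B :=
  S (a * star b * c) - S a * star (S b) * S c

lemma main (S : A →L[ℂ] B)
    (hT : ∀ a b c : A, S (a * star b * c) + S (c * star b * a)
      = S a * star (S b) * S c + S c * star (S b) * S a)
    (hRow : ∀ u v w : A, S (u * v) * star (S w) = S u * star (S (w * star v)))
    (hCol : ∀ u v w : A, star (S w) * S (u * v) = star (S (star u * w)) * S v)
    (a b c : A) : F S a b c = 0 := by
  have hIII : ∀ a b c : A, F S a b c = - F S c b a := by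
    intro a b c
    simp only [F]
    rw [eq_neg_iff_add_eq_zero, sub_add_sub_comm, hT, sub_self]
  have hI : ∀ u v w z : A, F S (u * v) w z = F S u (w * star v) z := by
    intro u v w z
    simp only [F]
    have harg : u * v * star w * z = u * star (w * star v) * z := by
      rw [star_mul, star_star, mul_assoc u v]
    rw [harg]
    conv_lhs => rw [hRow u v w]
  have hII : ∀ u v w z : A, F S z w (u * v) = F S z (star u * w) v := by
    intro u v w z
    simp only [F]
    have harg : z * star w * (u * v) = z * star (star u * w) * v := by
      simp only [star_mul, star_star, mul_assoc]
    rw [harg]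
    have hprod : S z * star (S w) * S (u * v) = S z * star (S (star u * w)) * S v := by
      conv_lhs => rw [mul_assoc, hCol u v w, ← mul_assoc]
    rw [hprod]
  have hIV : ∀ u v w z : A, F S u (w * star v) z = F S v (star u * w) z := by
    intro u v w z
    rw [← hI u v w z, hIII (u * v) w z, hII u v w z, hIII z (star u * w) v, neg_neg]
  have hDiag : ∀ x m : A, F S x m x = 0 := by
    intro x m
    have h := hIII x m x
    have h2 : (2 : ℂ) • F S x m x = 0 := by
      rw [two_smul]
      nth_rewrite 1 [h]
      rw [neg_add_cancel]
    exact (smul_eq_zero.mp h2).resolve_left two_ne_zero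
  have hSq : ∀ a b u : A, F S a b (u * u) = 0 := by
    intro a b u
    rw [hII u u b a, ← hIV u a b u]
    exact hDiag u (b * star a)
  have hSub : ∀ a b c d : A, F S a b (c - d) = F S a b c - F S a b d := by
    intro a b c d
    simp only [F, mul_sub, map_sub]
    abel
  have hAdd : ∀ a b c d : A, F S a b (c + d) = F S a b c + F S a b d := by
    intro a b c d
    simp only [F, mul_add, map_add]
    abel
  have hSmul : ∀ (r : ℂ) (a b c : A), F S a b (r • c) = r • F S a b c := by
    intro r a b c
    simp only [F, mul_smul_comm, map_smul, smul_sub]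
  have hSA : ∀ (a b x : A), IsSelfAdjoint x → F S a b x = 0 := by
    intro a b x hx
    obtain ⟨u, v, huv⟩ : ∃ u v : A, u * u - v * v = x := by
      set f : ℝ → ℝ := fun t => Real.sqrt (max t 0) with hf
      set g : ℝ → ℝ := fun t => Real.sqrt (max (-t) 0) with hg
      have hfc : ContinuousOn f (quasispectrum ℝ x) :=
        (Real.continuous_sqrt.comp (continuous_id.max continuous_const)).continuousOn
      have hgc : ContinuousOn g (quasispectrum ℝ x) :=
        (Real.continuous_sqrt.comp (continuous_neg.max continuous_const)).continuousOn
      have hf0 : f 0 = 0 := by simp [hf]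
      have hg0 : g 0 = 0 := by simp [hg]
      refine ⟨cfcₙ f x, cfcₙ g x, ?_⟩
      have hu : cfcₙ f x * cfcₙ f x = cfcₙ (fun t : ℝ => max t 0) x := by
        rw [← cfcₙ_mul f f x hfc hf0 hfc hf0]
        exact cfcₙ_congr fun t _ => Real.mul_self_sqrt (le_max_right _ _)
      have hv : cfcₙ g x * cfcₙ g x = cfcₙ (fun t : ℝ => max (-t) 0) x := by
        rw [← cfcₙ_mul g g x hgc hg0 hgc hg0]
        exact cfcₙ_congr fun t _ => Real.mul_self_sqrt (le_max_right _ _)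
      rw [hu, hv, ← cfcₙ_sub (fun t : ℝ => max t 0) (fun t : ℝ => max (-t) 0) x
        ((continuous_id.max continuous_const).continuousOn) (by simp)
        ((continuous_neg.max continuous_const).continuousOn) (by simp)]
      have heq : cfcₙ (fun t : ℝ => max t 0 - max (-t) 0) x = cfcₙ (id : ℝ → ℝ) x := by
        refine cfcₙ_congr fun t _ => ?_
        rcases le_total t 0 with h | h
        · rw [max_eq_right h, max_eq_left (by linarith), zero_sub, neg_neg, id]
        · rw [max_eq_left h, max_eq_right (by linarith), sub_zero, id]
      rw [heq, cfcₙ_id ℝ x hx]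
    rw [← huv, hSub, hSq, hSq, sub_zero]
  have hc := realPart_add_I_smul_imaginaryPart c
  rw [← hc, hAdd, hSmul, hSA a b _ (realPart c).2, hSA a b _ (imaginaryPart c).2,
    smul_zero, add_zero]

end TripleHomAux

/-- A bounded linear triple homomorphism `S : A → B` between
C*-algebras is a TRO homomorphism if and only if it is 2-orthogonality preserving,
i.e. the amplification `S₂ : M₂(A) → M₂(B)` maps orthogonal pairs (`x y* = 0` and
`y* x = 0`) to orthogonal pairs. -/
theorem tripleHom_troHom_iff_two_orthogonality_preserving
    {A B : Type*} [NonUnitalCStarAlgebra A] [NonUnitalCStarAlgebra B]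
    (S : A →L[ℂ] B)
    (hS : ∀ a b c : A,
      S ((2⁻¹ : ℂ) • (a * star b * c + c * star b * a)) =
        (2⁻¹ : ℂ) • (S a * star (S b) * S c + S c * star (S b) * S a)) :
    (∀ a b c : A, S (a * star b * c) = S a * star (S b) * S c) ↔
    (∀ x y : Matrix (Fin 2) (Fin 2) A,
      x * star y = 0 ∧ star y * x = 0 →
        x.map ⇑S * star (y.map ⇑S) = 0 ∧ star (y.map ⇑S) * x.map ⇑S = 0) := by
  have hT : ∀ a b c : A, S (a * star b * c) + S (c * star b * a)
      = S a * star (S b) * S c + S c * star (S b) * S a := by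
    intro a b c
    have h := hS a b c
    rw [map_smul] at h
    have h2 := smul_right_injective B (by norm_num : (2⁻¹ : ℂ) ≠ 0) h
    rw [map_add] at h2
    exact h2
  constructor
  · -- TRO homomorphism implies 2-orthogonality preserving
    intro hTRO x y hxy
    obtain ⟨h1, h2⟩ := hxy
    have hmap : ∀ p q r : Matrix (Fin 2) (Fin 2) A,
        (p * star q * r).map ⇑S = p.map ⇑S * star (q.map ⇑S) * r.map ⇑S := by
      intro p q r
      ext i j
      simp only [Matrix.map_apply, Matrix.mul_apply, Matrix.star_apply,
        Finset.sum_mul, map_sum]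
      exact Finset.sum_congr rfl fun k _ => Finset.sum_congr rfl fun l _ => hTRO _ _ _
    have hmapzero : (0 : Matrix (Fin 2) (Fin 2) A).map ⇑S = 0 :=
      Matrix.map_zero _ (map_zero S)
    have key : ∀ M : Matrix (Fin 2) (Fin 2) B, M * star M = 0 → M = 0 := by
      intro M hM
      letI : PartialOrder (Unitization ℂ B) := CStarAlgebra.spectralOrder _
      letI : StarOrderedRing (Unitization ℂ B) := CStarAlgebra.spectralOrderedRing _
      ext i j
      have h0 : M i 0 * star (M i 0) + M i 1 * star (M i 1) = 0 := by
        have := congrFun (congrFun hM i) i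
        simpa [Matrix.mul_apply, Matrix.star_apply, Fin.sum_univ_two] using this
      have h0' : ((M i 0 * star (M i 0) : B) : Unitization ℂ B)
          + ((M i 1 * star (M i 1) : B) : Unitization ℂ B) = 0 := by
        rw [← Unitization.inr_add, h0, Unitization.inr_zero]
      have hnn : ∀ b : B, (0 : Unitization ℂ B) ≤ ((b * star b : B) : Unitization ℂ B) := by
        intro b
        rw [Unitization.inr_mul, Unitization.inr_star]
        exact mul_star_self_nonneg _
      have hzero : ∀ k : Fin 2, M i k * star (M i k) = 0 := by
        have e0 : ((M i 0 * star (M i 0) : B) : Unitization ℂ B) = 0 := by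
          refine le_antisymm ?_ (hnn _)
          rw [eq_neg_of_add_eq_zero_left h0']
          exact neg_nonpos_of_nonneg (hnn _)
        have e1 : ((M i 1 * star (M i 1) : B) : Unitization ℂ B) = 0 := by
          refine le_antisymm ?_ (hnn _)
          rw [eq_neg_of_add_eq_zero_right h0']
          exact neg_nonpos_of_nonneg (hnn _)
        intro k
        fin_cases k
        · rw [← Unitization.inr_zero ℂ, Unitization.inr_injective.eq_iff] at e0
          exact e0
        · rw [← Unitization.inr_zero ℂ, Unitization.inr_injective.eq_iff] at e1
          exact e1
      have f0 : M i 0 = 0 := (CStarRing.mul_star_self_eq_zero_iff _).mp (hzero 0)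
      have f1 : M i 1 = 0 := (CStarRing.mul_star_self_eq_zero_iff _).mp (hzero 1)
      fin_cases j
      · simpa using f0
      · simpa using f1
    have h3 : star x * y = 0 := by
      have := congrArg star h2
      simpa [star_mul, star_star] using this
    constructor
    · apply key
      calc x.map ⇑S * star (y.map ⇑S) * star (x.map ⇑S * star (y.map ⇑S))
          = x.map ⇑S * star (y.map ⇑S) * (y.map ⇑S * star (x.map ⇑S)) := by
            rw [star_mul, star_star]
        _ = x.map ⇑S * star (y.map ⇑S) * y.map ⇑S * star (x.map ⇑S) := by
            rw [← mul_assoc]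
        _ = (x * star y * y).map ⇑S * star (x.map ⇑S) := by rw [hmap x y y]
        _ = 0 := by rw [h1, zero_mul, hmapzero, zero_mul]
    · apply key
      calc star (y.map ⇑S) * x.map ⇑S * star (star (y.map ⇑S) * x.map ⇑S)
          = star (y.map ⇑S) * x.map ⇑S * (star (x.map ⇑S) * y.map ⇑S) := by
            rw [star_mul, star_star]
        _ = star (y.map ⇑S) * (x.map ⇑S * (star (x.map ⇑S) * y.map ⇑S)) := by
            rw [mul_assoc]
        _ = star (y.map ⇑S) * (x.map ⇑S * star (x.map ⇑S) * y.map ⇑S) := by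
            rw [← mul_assoc (x.map ⇑S)]
        _ = star (y.map ⇑S) * (x * star x * y).map ⇑S := by rw [hmap x x y]
        _ = 0 := by
            rw [mul_assoc x, h3, mul_zero, hmapzero, mul_zero]
  · -- 2-orthogonality preserving implies TRO homomorphism
    intro hOP a b c
    have LemR : ∀ u v w z : A, u * star w + v * star z = 0 →
        S u * star (S w) + S v * star (S z) = 0 := by
      intro u v w z h
      have horth : (!![u, v; 0, 0] : Matrix (Fin 2) (Fin 2) A) * star !![0, 0; w, z] = 0 ∧
          star (!![0, 0; w, z] : Matrix (Fin 2) (Fin 2) A) * !![u, v; 0, 0] = 0 := by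
        constructor <;>
        · ext i j
          fin_cases i <;> fin_cases j <;>
            simp [Matrix.mul_apply, Matrix.star_apply, Fin.sum_univ_two, h]
      have hc := (hOP _ _ horth).1
      have := congrFun (congrFun hc 0) 1
      simpa [Matrix.mul_apply, Matrix.map_apply, Matrix.star_apply, Fin.sum_univ_two]
        using this
    have LemC : ∀ u v w z : A, star w * u + star z * v = 0 →
        star (S w) * S u + star (S z) * S v = 0 := by
      intro u v w z h
      have horth : (!![u, 0; v, 0] : Matrix (Fin 2) (Fin 2) A) * star !![0, w; 0, z] = 0 ∧
          star (!![0, w; 0, z] : Matrix (Fin 2) (Fin 2) A) * !![u, 0; v, 0] = 0 := by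
        constructor <;>
        · ext i j
          fin_cases i <;> fin_cases j <;>
            simp [Matrix.mul_apply, Matrix.star_apply, Fin.sum_univ_two, h]
      have hc := (hOP _ _ horth).2
      have := congrFun (congrFun hc 1) 0
      simpa [Matrix.mul_apply, Matrix.map_apply, Matrix.star_apply, Fin.sum_univ_two]
        using this
    have Req : ∀ u w v z : A, u * star w = v * star z →
        S u * star (S w) = S v * star (S z) := by
      intro u w v z h
      have h' : u * star w + (-v) * star z = 0 := by
        rw [h, neg_mul, add_neg_cancel]
      have := LemR u (-v) w z h'
      rw [map_neg, neg_mul, add_neg_eq_zero] at this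
      exact this
    have Ceq : ∀ u w v z : A, star w * u = star z * v →
        star (S w) * S u = star (S z) * S v := by
      intro u w v z h
      have h' : star w * u + star z * (-v) = 0 := by
        rw [h, mul_neg, add_neg_cancel]
      have := LemC u (-v) w z h'
      rw [map_neg, mul_neg, add_neg_eq_zero] at this
      exact this
    have hRow : ∀ u v w : A, S (u * v) * star (S w) = S u * star (S (w * star v)) := by
      intro u v w
      refine Req (u * v) w u (w * star v) ?_
      rw [star_mul, star_star, mul_assoc]
    have hCol : ∀ u v w : A, star (S w) * S (u * v) = star (S (star u * w)) * S v := by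
      intro u v w
      refine Ceq (u * v) w v (star u * w) ?_
      rw [star_mul, star_star, mul_assoc]
    have := TripleHomAux.main S hT hRow hCol a b c
    simp only [TripleHomAux.F, sub_eq_zero] at this
    exact this
end

section
/- Let S : A → B be a bounded linear Jordan *-homomorphism between C*-algebras, i.e. S(a ∘ b) = S(a) ∘ S(b) and S(a*) = S(a)* for all a, b ∈ A, where a ∘ b = (ab + ba)/2. Then S is a *-homomorphism (i.e. S is multiplicative) if and only if S is 2-orthogonality preserving. -/
/-!
Multiplicativity makes the amplification `S₂` a ring homomorphism commuting with `*`, so it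
preserves orthogonality. Conversely, `S₂` preserves the orthogonality of
`x = [[a b, -a], [0, 0]]` and `y = [[0, 0], [c*, (b c)*]]`, which yields
`S(a b) S(c) = S(a) S(b c)`. Along an approximate unit `(e)` of `A` this gives
`S(e) S(a b) → S(a) S(b)` and `S(a b) S(e) → S(a) S(b)`, while the Jordan identity makes their
average `S(e ∘ a b)` tend to `S(a b)`.
-/

open Filter Topology

section Orthogonality

variable {R R' : Type*}

def StarOrthogonal [Mul R] [Star R] [Zero R] (a b : R) : Prop :=
  a * star b = 0 ∧ star b * a = 0

def OrthogonalityPreserving [Mul R] [Star R] [Zero R] [Mul R'] [Star R'] [Zero R']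
    (f : R → R') : Prop :=
  ∀ a b, StarOrthogonal a b → StarOrthogonal (f a) (f b)

theorem orthogonalityPreserving_matrixMap {n F : Type*} [Fintype n]
    [NonUnitalNonAssocSemiring R] [StarRing R] [NonUnitalNonAssocSemiring R'] [StarRing R']
    [FunLike F R R'] [NonUnitalRingHomClass F R R'] [StarHomClass F R R'] (f : F) :
    OrthogonalityPreserving (fun x : Matrix n n R => x.map f) := by
  rintro a b ⟨hab, hba⟩
  have hstar : (star b).map f = star (b.map f) := Matrix.conjTranspose_map f (map_star f)
  refine ⟨?_, ?_⟩
  · rw [← hstar, ← Matrix.map_mul, hab, Matrix.map_zero _ (map_zero f)]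
  · rw [← hstar, ← Matrix.map_mul, hba, Matrix.map_zero _ (map_zero f)]

theorem OrthogonalityPreserving.map_mul_mul_eq [NonUnitalRing R] [StarRing R]
    [NonUnitalRing R'] [StarRing R'] {F : Type*} [FunLike F R R'] [AddMonoidHomClass F R R']
    {f : F} (hf : OrthogonalityPreserving (fun x : Matrix (Fin 2) (Fin 2) R => x.map f))
    (hstar : ∀ a, f (star a) = star (f a)) (a b c : R) :
    f (a * b) * f c = f a * f (b * c) := by
  have horth : StarOrthogonal !![a * b, -a; 0, 0] !![0, 0; star c, star (b * c)] := by
    constructor <;> ext i j <;> fin_cases i <;> fin_cases j <;>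
      simp [Matrix.mul_apply, mul_assoc]
  have h := congrFun (congrFun (hf _ _ horth).1 0) 1
  simpa [Matrix.mul_apply, ← hstar, sub_eq_zero, ← sub_eq_add_neg] using h

end Orthogonality

theorem map_mul_of_isApproximateUnit {𝕜 A B : Type*} [NormedField 𝕜] [NeZero (2 : 𝕜)]
    [NonUnitalNormedRing A] [NormedSpace 𝕜 A] [NonUnitalNormedRing B] [NormedSpace 𝕜 B]
    {l : Filter A} (hl : l.IsApproximateUnit) (S : A →L[𝕜] B)
    (hjordan : ∀ a b : A,
      S ((2⁻¹ : 𝕜) • (a * b + b * a)) = (2⁻¹ : 𝕜) • (S a * S b + S b * S a))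
    (hassoc : ∀ a b c : A, S (a * b) * S c = S a * S (b * c)) (a b : A) :
    S (a * b) = S a * S b := by
  have := hl.neBot
  have hleft : Tendsto (fun e => S e * S (a * b)) l (𝓝 (S a * S b)) := by
    simp_rw [← hassoc]
    exact ((S.continuous.tendsto a).comp (hl.tendsto_mul_right a)).mul_const (S b)
  have hright : Tendsto (fun e => S (a * b) * S e) l (𝓝 (S a * S b)) := by
    simp_rw [hassoc]
    exact ((S.continuous.tendsto b).comp (hl.tendsto_mul_left b)).const_mul (S a)
  have hjordan_lim : Tendsto (fun e => S ((2⁻¹ : 𝕜) • (e * (a * b) + a * b * e))) l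
      (𝓝 (S ((2⁻¹ : 𝕜) • (a * b + a * b)))) :=
    (S.continuous.tendsto _).comp
      (((hl.tendsto_mul_right _).add (hl.tendsto_mul_left _)).const_smul _)
  have hmean := (hleft.add hright).const_smul (2⁻¹ : 𝕜)
  rw [← two_smul 𝕜 (a * b), inv_smul_smul₀ two_ne_zero] at hjordan_lim
  rw [← two_smul 𝕜 (S a * S b), inv_smul_smul₀ two_ne_zero] at hmean
  simp_rw [hjordan] at hjordan_lim
  exact tendsto_nhds_unique hjordan_lim hmean

/-- A bounded linear Jordan `*`-homomorphism `S : A → B` between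
C*-algebras is a `*`-homomorphism (i.e. multiplicative) if and only if it is
2-orthogonality preserving, i.e. the amplification `S₂ : M₂(A) → M₂(B)` maps
orthogonal pairs (`x y* = 0` and `y* x = 0`) to orthogonal pairs. -/
theorem jordanStarHom_multiplicative_iff_two_orthogonality_preserving
    {A B : Type*} [NonUnitalCStarAlgebra A] [NonUnitalCStarAlgebra B]
    (S : A →L[ℂ] B)
    (hjordan : ∀ a b : A,
      S ((2⁻¹ : ℂ) • (a * b + b * a)) = (2⁻¹ : ℂ) • (S a * S b + S b * S a))
    (hstar : ∀ a : A, S (star a) = star (S a)) :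
    (∀ a b : A, S (a * b) = S a * S b) ↔
    (∀ x y : Matrix (Fin 2) (Fin 2) A,
      x * star y = 0 ∧ star y * x = 0 →
        x.map ⇑S * star (y.map ⇑S) = 0 ∧ star (y.map ⇑S) * x.map ⇑S = 0) := by
  refine ⟨fun hmul => ?_, fun horth => ?_⟩
  · let φ : A →⋆ₙₐ[ℂ] B :=
      { S.toLinearMap with map_zero' := map_zero S, map_mul' := hmul, map_star' := hstar }
    exact orthogonalityPreserving_matrixMap φ
  · let _ := CStarAlgebra.spectralOrder A
    let _ := CStarAlgebra.spectralOrderedRing A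
    exact map_mul_of_isApproximateUnit
      (CStarAlgebra.increasingApproximateUnit A).toIsApproximateUnit S hjordan
      (OrthogonalityPreserving.map_mul_mul_eq horth hstar)
end

section
/- Every bounded linear triple homomorphism S : A → B between C*-algebras which is 2-orthogonality preserving is completely orthogonality preserving, i.e. S_n is orthogonality preserving for every n ≥ 1. -/
section AuxTripleHom

variable {A B : Type*} [NonUnitalCStarAlgebra A] [NonUnitalCStarAlgebra B]

private lemma aux_row (S : A →L[ℂ] B)
    (h2 : ∀ x y : Matrix (Fin 2) (Fin 2) A,
      x * star y = 0 ∧ star y * x = 0 →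
        x.map ⇑S * star (y.map ⇑S) = 0 ∧ star (y.map ⇑S) * x.map ⇑S = 0)
    (a b c d : A) (habcd : a * star c + b * star d = 0) :
    S a * star (S c) + S b * star (S d) = 0 := by
  set X : Matrix (Fin 2) (Fin 2) A := Matrix.of ![![a, b], ![0, 0]] with hX
  set Y : Matrix (Fin 2) (Fin 2) A := Matrix.of ![![0, 0], ![c, d]] with hY
  have hXY : X * star Y = 0 := by
    ext i j
    fin_cases i <;> fin_cases j <;>
      simp [hX, hY, Matrix.mul_apply, Fin.sum_univ_two, Matrix.star_apply] <;>
      first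
        | rfl
        | exact habcd
  have hYX : star Y * X = 0 := by
    ext i j
    fin_cases i <;> fin_cases j <;>
      simp [hX, hY, Matrix.mul_apply, Fin.sum_univ_two, Matrix.star_apply]
  obtain ⟨hmap, -⟩ := h2 X Y ⟨hXY, hYX⟩
  have h01 := congrFun (congrFun hmap 0) 1
  simpa [hX, hY, Matrix.mul_apply, Fin.sum_univ_two, Matrix.star_apply,
    Matrix.map_apply, map_zero] using h01

private lemma aux_col (S : A →L[ℂ] B)
    (h2 : ∀ x y : Matrix (Fin 2) (Fin 2) A,
      x * star y = 0 ∧ star y * x = 0 →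
        x.map ⇑S * star (y.map ⇑S) = 0 ∧ star (y.map ⇑S) * x.map ⇑S = 0)
    (a b c d : A) (habcd : star c * a + star d * b = 0) :
    star (S c) * S a + star (S d) * S b = 0 := by
  set X : Matrix (Fin 2) (Fin 2) A := Matrix.of ![![a, 0], ![b, 0]] with hX
  set Y : Matrix (Fin 2) (Fin 2) A := Matrix.of ![![0, c], ![0, d]] with hY
  have hXY : X * star Y = 0 := by
    ext i j
    fin_cases i <;> fin_cases j <;>
      simp [hX, hY, Matrix.mul_apply, Fin.sum_univ_two, Matrix.star_apply]
  have hYX : star Y * X = 0 := by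
    ext i j
    fin_cases i <;> fin_cases j <;>
      simp [hX, hY, Matrix.mul_apply, Fin.sum_univ_two, Matrix.star_apply] <;>
      first
        | rfl
        | exact habcd
  obtain ⟨-, hmap⟩ := h2 X Y ⟨hXY, hYX⟩
  have h10 := congrFun (congrFun hmap 1) 0
  simpa [hX, hY, Matrix.mul_apply, Fin.sum_univ_two, Matrix.star_apply,
    Matrix.map_apply, map_zero] using h10

private lemma aux_hop_right (S : A →L[ℂ] B)
    (hrow : ∀ a b c d : A, a * star c + b * star d = 0 →
      S a * star (S c) + S b * star (S d) = 0)
    (e : A) (he : star e = e) (u w : A) :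
    S u * star (S (e * w)) = S (u * star w) * star (S e) := by
  have key : (u * star w) * star e + (-u) * star (e * w) = 0 := by
    simp [star_mul, he, mul_assoc]
  have h := hrow (u * star w) (-u) e (e * w) key
  rw [map_neg, neg_mul, add_neg_eq_zero] at h
  exact h.symm

private lemma aux_hop_left (S : A →L[ℂ] B)
    (hcol : ∀ a b c d : A, star c * a + star d * b = 0 →
      star (S c) * S a + star (S d) * S b = 0)
    (e : A) (he : star e = e) (u w : A) :
    star (S (w * e)) * S u = star (S e) * S (star w * u) := by
  have key : star (w * e) * u + star (-e) * (star w * u) = 0 := by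
    simp [star_mul, he, mul_assoc]
  have h := hcol u (star w * u) (w * e) (-e) key
  rw [map_neg, star_neg, neg_mul, add_neg_eq_zero] at h
  exact h

open Unitization in
private lemma aux_inr_sum {ι : Type*} (s : Finset ι) (g : ι → A) :
    ((∑ i ∈ s, g i : A) : Unitization ℂ A) = ∑ i ∈ s, ((g i : A) : Unitization ℂ A) := by
  exact map_sum (inrNonUnitalStarAlgHom ℂ A) g s

open Unitization in
private lemma aux_approx {A : Type*} [NonUnitalCStarAlgebra A]
    (h : A) (hh : 0 ≤ (h : Unitization ℂ A)) {ε : ℝ} (hε : 0 < ε) :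
    ∃ e : A, star e = e ∧
      (∀ w : A, ((w * star w : A) : Unitization ℂ A) ≤ (h : Unitization ℂ A) →
        ‖w - e * w‖ < ε) ∧
      (∀ w : A, ((star w * w : A) : Unitization ℂ A) ≤ (h : Unitization ℂ A) →
        ‖w - w * e‖ < ε) := by
  set m : ℝ := (ε ^ 2)⁻¹ with hm
  have hm0 : 0 < m := by positivity
  set f : ℝ → ℝ := fun t => 1 - (1 + m * |t|)⁻¹ with hf
  have hf0 : f 0 = 0 := by simp [hf]
  have hfc : Continuous f := by
    have hne : ∀ t : ℝ, 1 + m * |t| ≠ 0 := fun t => by positivity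
    exact continuous_const.sub
      ((continuous_const.add (continuous_const.mul continuous_abs)).inv₀ hne)
  have hsaH : IsSelfAdjoint (h : Unitization ℂ A) := .of_nonneg hh
  have hsah : IsSelfAdjoint h := (isSelfAdjoint_inr (R := ℂ)).mp hsaH
  set E : Unitization ℂ A := cfc f (h : Unitization ℂ A) with hE
  have hecoe : ((cfcₙ f h : A) : Unitization ℂ A) = E := real_cfcₙ_eq_cfc_inr h f hf0
  set c : Unitization ℂ A := 1 - E with hc
  have hEsa : IsSelfAdjoint E := cfc_predicate f _
  have hcsa : IsSelfAdjoint c := (IsSelfAdjoint.one _).sub hEsa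
  have kb : ∀ X : Unitization ℂ A, 0 ≤ X → X ≤ (h : Unitization ℂ A) →
      ‖c * X * c‖ ≤ ε ^ 2 / 4 := by
    intro X hX hXh
    have h1 : c * X * c ≤ c * (h : Unitization ℂ A) * c :=
      IsSelfAdjoint.conjugate_le_conjugate hXh hcsa
    have h2 : 0 ≤ c * X * c := hcsa.conjugate_nonneg hX
    refine (CStarAlgebra.norm_le_norm_of_nonneg_of_le h2 h1).trans ?_
    have hcH : c * (h : Unitization ℂ A) * c =
        cfc (fun t : ℝ => (1 - f t) * t * (1 - f t)) (h : Unitization ℂ A) := by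
      have hfc' : ContinuousOn f (spectrum ℝ (h : Unitization ℂ A)) := hfc.continuousOn
      have h1c : ContinuousOn (fun _ : ℝ => (1:ℝ)) (spectrum ℝ (h : Unitization ℂ A)) :=
        continuousOn_const
      have hc_eq : c = cfc (fun t : ℝ => 1 - f t) (h : Unitization ℂ A) := by
        rw [cfc_sub (fun _ : ℝ => (1:ℝ)) f (h : Unitization ℂ A) h1c hfc',
          cfc_const 1 _, map_one]
      have step1 : cfc (fun t : ℝ => (1 - f t) * t * (1 - f t)) (h : Unitization ℂ A) =
          cfc (fun t : ℝ => (1 - f t) * t) (h : Unitization ℂ A) *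
            cfc (fun t : ℝ => 1 - f t) (h : Unitization ℂ A) :=
        cfc_mul _ _ (h : Unitization ℂ A)
          (((continuous_const.sub hfc).mul continuous_id).continuousOn)
          ((continuous_const.sub hfc).continuousOn)
      have step2 : cfc (fun t : ℝ => (1 - f t) * t) (h : Unitization ℂ A) =
          cfc (fun t : ℝ => 1 - f t) (h : Unitization ℂ A) *
            cfc (id : ℝ → ℝ) (h : Unitization ℂ A) :=
        cfc_mul _ _ (h : Unitization ℂ A)
          ((continuous_const.sub hfc).continuousOn) continuousOn_id
      rw [step1, step2, ← hc_eq, cfc_id ℝ (h : Unitization ℂ A)]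
    rw [hcH]
    refine norm_cfc_le (by positivity) ?_
    intro t ht
    have ht0 : 0 ≤ t := spectrum_nonneg_of_nonneg hh ht
    have habs : |t| = t := abs_of_nonneg ht0
    have hd : (0:ℝ) < 1 + m * t := by positivity
    have h1f : (1:ℝ) - f t = (1 + m * t)⁻¹ := by simp [hf, habs]
    have hval : (1 - f t) * t * (1 - f t) = t / (1 + m * t) ^ 2 := by
      rw [h1f, pow_two]
      field_simp
    rw [hval, Real.norm_eq_abs, abs_of_nonneg (by positivity)]
    rw [div_le_div_iff₀ (by positivity) (by norm_num)]
    have h4 : ε ^ 2 = m⁻¹ := by rw [hm, inv_inv]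
    rw [h4]
    have hm' : m * m⁻¹ = 1 := mul_inv_cancel₀ hm0.ne'
    nlinarith [sq_nonneg (m * t - 1), sq_nonneg (m*t)]
  refine ⟨cfcₙ f h, (cfcₙ_predicate f h).star_eq, ?_, ?_⟩
  · intro w hw
    have hX0 : 0 ≤ ((w * star w : A) : Unitization ℂ A) := by
      rw [inr_mul, inr_star]
      exact mul_star_self_nonneg _
    have hcoe : ((w - cfcₙ f h * w : A) : Unitization ℂ A) = c * (w : Unitization ℂ A) := by
      rw [inr_sub, inr_mul, hecoe, hc, sub_mul, one_mul]
    have hnorm : ‖w - cfcₙ f h * w‖ ^ 2 = ‖c * ((w * star w : A) : Unitization ℂ A) * c‖ := by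
      rw [← norm_inr (𝕜 := ℂ) (w - cfcₙ f h * w), hcoe, sq, ← CStarRing.norm_self_mul_star]
      congr 1
      rw [star_mul, hcsa.star_eq, inr_mul, inr_star]
      noncomm_ring
    have hlt : ‖w - cfcₙ f h * w‖ ^ 2 < ε ^ 2 := by
      have := kb _ hX0 hw
      rw [← hnorm] at this
      nlinarith
    exact lt_of_pow_lt_pow_left₀ 2 hε.le hlt
  · intro w hw
    have hX0 : 0 ≤ ((star w * w : A) : Unitization ℂ A) := by
      rw [inr_mul, inr_star]
      exact star_mul_self_nonneg _
    have hcoe : ((w - w * cfcₙ f h : A) : Unitization ℂ A) = (w : Unitization ℂ A) * c := by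
      rw [inr_sub, inr_mul, hecoe, hc, mul_sub, mul_one]
    have hnorm : ‖w - w * cfcₙ f h‖ ^ 2 = ‖c * ((star w * w : A) : Unitization ℂ A) * c‖ := by
      rw [← norm_inr (𝕜 := ℂ) (w - w * cfcₙ f h), hcoe, sq, ← CStarRing.norm_star_mul_self]
      congr 1
      rw [star_mul, hcsa.star_eq, inr_mul, inr_star]
      noncomm_ring
    have hlt : ‖w - w * cfcₙ f h‖ ^ 2 < ε ^ 2 := by
      have := kb _ hX0 hw
      rw [← hnorm] at this
      nlinarith
    exact lt_of_pow_lt_pow_left₀ 2 hε.le hlt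

end AuxTripleHom

/-- Every bounded linear triple homomorphism between C*-algebras
which is 2-orthogonality preserving is completely orthogonality preserving: every
amplification `Sₙ` (`n ≥ 1`) maps orthogonal pairs (`x y* = 0` and `y* x = 0`) to
orthogonal pairs. -/
theorem tripleHom_completely_orthogonality_preserving_of_two
    {A B : Type*} [NonUnitalCStarAlgebra A] [NonUnitalCStarAlgebra B]
    (S : A →L[ℂ] B)
    (hS : ∀ a b c : A,
      S ((2⁻¹ : ℂ) • (a * star b * c + c * star b * a)) =
        (2⁻¹ : ℂ) • (S a * star (S b) * S c + S c * star (S b) * S a))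
    (h2 : ∀ x y : Matrix (Fin 2) (Fin 2) A,
      x * star y = 0 ∧ star y * x = 0 →
        x.map ⇑S * star (y.map ⇑S) = 0 ∧ star (y.map ⇑S) * x.map ⇑S = 0) :
    ∀ (n : ℕ), 1 ≤ n → ∀ x y : Matrix (Fin n) (Fin n) A,
      x * star y = 0 ∧ star y * x = 0 →
        x.map ⇑S * star (y.map ⇑S) = 0 ∧ star (y.map ⇑S) * x.map ⇑S = 0 := by
  intro n _hn x y hxy'
  obtain ⟨hxy, hyx⟩ := hxy'
  have hrow := aux_row S h2
  have hcol := aux_col S h2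
  classical
  -- a common positive "bound" element built from the entries of `y`
  set h : A := (∑ p : Fin n, ∑ q : Fin n, y p q * star (y p q)) +
      (∑ p : Fin n, ∑ q : Fin n, star (y p q) * y p q) with hh_def
  have hcoeH : (h : Unitization ℂ A) =
      (∑ p : Fin n, ∑ q : Fin n,
        ((y p q * star (y p q) : A) : Unitization ℂ A)) +
      (∑ p : Fin n, ∑ q : Fin n,
        ((star (y p q) * y p q : A) : Unitization ℂ A)) := by
    rw [hh_def, Unitization.inr_add, aux_inr_sum, aux_inr_sum]
    congr 1 <;> exact Finset.sum_congr rfl fun p _ => aux_inr_sum _ _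
  have hterm1 : ∀ p q : Fin n, (0:Unitization ℂ A) ≤ ((y p q * star (y p q) : A) : Unitization ℂ A) := by
    intro p q
    rw [Unitization.inr_mul, Unitization.inr_star]
    exact mul_star_self_nonneg _
  have hterm2 : ∀ p q : Fin n, (0:Unitization ℂ A) ≤ ((star (y p q) * y p q : A) : Unitization ℂ A) := by
    intro p q
    rw [Unitization.inr_mul, Unitization.inr_star]
    exact star_mul_self_nonneg _
  have hsum1 : (0:Unitization ℂ A) ≤ ∑ p : Fin n, ∑ q : Fin n,
      ((y p q * star (y p q) : A) : Unitization ℂ A) :=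
    Finset.sum_nonneg fun p _ => Finset.sum_nonneg fun q _ => hterm1 p q
  have hsum2 : (0:Unitization ℂ A) ≤ ∑ p : Fin n, ∑ q : Fin n,
      ((star (y p q) * y p q : A) : Unitization ℂ A) :=
    Finset.sum_nonneg fun p _ => Finset.sum_nonneg fun q _ => hterm2 p q
  have hH0 : 0 ≤ (h : Unitization ℂ A) := by
    rw [hcoeH]; exact add_nonneg hsum1 hsum2
  have key_le1 : ∀ p q : Fin n,
      ((y p q * star (y p q) : A) : Unitization ℂ A) ≤ (h : Unitization ℂ A) := by
    intro p q
    rw [hcoeH]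
    refine le_add_of_le_of_nonneg ?_ hsum2
    calc ((y p q * star (y p q) : A) : Unitization ℂ A)
        ≤ ∑ q' : Fin n, ((y p q' * star (y p q') : A) : Unitization ℂ A) :=
          Finset.single_le_sum (fun q' _ => hterm1 p q') (Finset.mem_univ q)
      _ ≤ _ := Finset.single_le_sum
          (f := fun p' => ∑ q' : Fin n, ((y p' q' * star (y p' q') : A) : Unitization ℂ A))
          (fun p' _ => Finset.sum_nonneg fun q' _ => hterm1 p' q') (Finset.mem_univ p)
  have key_le2 : ∀ p q : Fin n,
      ((star (y p q) * y p q : A) : Unitization ℂ A) ≤ (h : Unitization ℂ A) := by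
    intro p q
    rw [hcoeH]
    refine le_add_of_nonneg_of_le hsum1 ?_
    calc ((star (y p q) * y p q : A) : Unitization ℂ A)
        ≤ ∑ q' : Fin n, ((star (y p q') * y p q' : A) : Unitization ℂ A) :=
          Finset.single_le_sum (fun q' _ => hterm2 p q') (Finset.mem_univ q)
      _ ≤ _ := Finset.single_le_sum
          (f := fun p' => ∑ q' : Fin n, ((star (y p' q') * y p' q' : A) : Unitization ℂ A))
          (fun p' _ => Finset.sum_nonneg fun q' _ => hterm2 p' q') (Finset.mem_univ p)
  constructor
  · ext i j
    rw [Matrix.zero_apply, Matrix.mul_apply]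
    simp only [Matrix.map_apply, Matrix.star_apply]
    set z : B := ∑ k : Fin n, S (x i k) * star (S (y j k)) with hz_def
    show z = 0
    by_contra hz
    have hznorm : 0 < ‖z‖ := norm_pos_iff.mpr hz
    set C : ℝ := ∑ k : Fin n, ‖S (x i k)‖ * ‖S‖ with hC_def
    have hC0 : 0 ≤ C := Finset.sum_nonneg fun k _ => by positivity
    have hepos : 0 < ‖z‖ / (C + 1) := by positivity
    obtain ⟨e, he, hel, -⟩ := aux_approx h hH0 hepos
    have hzero : ∑ k : Fin n, S (x i k) * star (S (e * y j k)) = 0 := by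
      calc ∑ k : Fin n, S (x i k) * star (S (e * y j k))
          = ∑ k : Fin n, S (x i k * star (y j k)) * star (S e) :=
            Finset.sum_congr rfl fun k _ => aux_hop_right S hrow e he (x i k) (y j k)
        _ = (∑ k : Fin n, S (x i k * star (y j k))) * star (S e) := by
            rw [Finset.sum_mul]
        _ = S (∑ k : Fin n, x i k * star (y j k)) * star (S e) := by rw [map_sum]
        _ = S ((x * star y) i j) * star (S e) := by
            have harg : (∑ k : Fin n, x i k * star (y j k)) = (x * star y) i j := by
              simp [Matrix.mul_apply, Matrix.star_apply]
            rw [harg]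
        _ = 0 := by rw [hxy, Matrix.zero_apply, map_zero, zero_mul]
    have hz_eq : z = ∑ k : Fin n, S (x i k) * star (S (y j k - e * y j k)) := by
      rw [hz_def, ← sub_zero (∑ k : Fin n, S (x i k) * star (S (y j k))), ← hzero,
        ← Finset.sum_sub_distrib]
      exact Finset.sum_congr rfl fun k _ => by rw [map_sub, star_sub, mul_sub]
    have hbound : ‖z‖ ≤ C * (‖z‖ / (C + 1)) := by
      calc ‖z‖ = ‖∑ k : Fin n, S (x i k) * star (S (y j k - e * y j k))‖ := by
            rw [← hz_eq]
        _ ≤ ∑ k : Fin n, (‖S (x i k)‖ * ‖S‖) * (‖z‖ / (C + 1)) := by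
            refine (norm_sum_le _ _).trans (Finset.sum_le_sum fun k _ => ?_)
            refine (norm_mul_le _ _).trans ?_
            rw [norm_star, mul_assoc]
            refine mul_le_mul_of_nonneg_left ?_ (norm_nonneg _)
            refine (S.le_opNorm _).trans ?_
            exact mul_le_mul_of_nonneg_left (hel _ (key_le1 j k)).le (norm_nonneg _)
        _ = C * (‖z‖ / (C + 1)) := by rw [← Finset.sum_mul]
    have hfin : C * (‖z‖ / (C + 1)) < ‖z‖ := by
      have h1 : C * (‖z‖ / (C + 1)) < (C + 1) * (‖z‖ / (C + 1)) :=
        mul_lt_mul_of_pos_right (lt_add_one C) hepos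
      have h2 : (C + 1) * (‖z‖ / (C + 1)) = ‖z‖ := by field_simp
      linarith
    exact absurd (hbound.trans_lt hfin) (lt_irrefl _)
  · ext i j
    rw [Matrix.zero_apply, Matrix.mul_apply]
    simp only [Matrix.map_apply, Matrix.star_apply]
    set z : B := ∑ k : Fin n, star (S (y k i)) * S (x k j) with hz_def
    show z = 0
    by_contra hz
    have hznorm : 0 < ‖z‖ := norm_pos_iff.mpr hz
    set C : ℝ := ∑ k : Fin n, ‖S‖ * ‖S (x k j)‖ with hC_def
    have hC0 : 0 ≤ C := Finset.sum_nonneg fun k _ => by positivity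
    have hepos : 0 < ‖z‖ / (C + 1) := by positivity
    obtain ⟨e, he, -, her⟩ := aux_approx h hH0 hepos
    have hzero : ∑ k : Fin n, star (S (y k i * e)) * S (x k j) = 0 := by
      calc ∑ k : Fin n, star (S (y k i * e)) * S (x k j)
          = ∑ k : Fin n, star (S e) * S (star (y k i) * x k j) :=
            Finset.sum_congr rfl fun k _ => aux_hop_left S hcol e he (x k j) (y k i)
        _ = star (S e) * ∑ k : Fin n, S (star (y k i) * x k j) := by
            rw [Finset.mul_sum]
        _ = star (S e) * S (∑ k : Fin n, star (y k i) * x k j) := by rw [map_sum]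
        _ = star (S e) * S ((star y * x) i j) := by
            have harg : (∑ k : Fin n, star (y k i) * x k j) = (star y * x) i j := by
              simp [Matrix.mul_apply, Matrix.star_apply]
            rw [harg]
        _ = 0 := by rw [hyx, Matrix.zero_apply, map_zero, mul_zero]
    have hz_eq : z = ∑ k : Fin n, star (S (y k i - y k i * e)) * S (x k j) := by
      rw [hz_def, ← sub_zero (∑ k : Fin n, star (S (y k i)) * S (x k j)), ← hzero,
        ← Finset.sum_sub_distrib]
      exact Finset.sum_congr rfl fun k _ => by rw [map_sub, star_sub, sub_mul]
    have hbound : ‖z‖ ≤ C * (‖z‖ / (C + 1)) := by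
      calc ‖z‖ = ‖∑ k : Fin n, star (S (y k i - y k i * e)) * S (x k j)‖ := by
            rw [← hz_eq]
        _ ≤ ∑ k : Fin n, (‖S‖ * ‖S (x k j)‖) * (‖z‖ / (C + 1)) := by
            refine (norm_sum_le _ _).trans (Finset.sum_le_sum fun k _ => ?_)
            refine (norm_mul_le _ _).trans ?_
            rw [norm_star]
            refine le_trans (mul_le_mul_of_nonneg_right ((S.le_opNorm _).trans
              (mul_le_mul_of_nonneg_left (her _ (key_le2 k i)).le (norm_nonneg _)))
              (norm_nonneg _)) (le_of_eq (by ring))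
        _ = C * (‖z‖ / (C + 1)) := by rw [← Finset.sum_mul]
    have hfin : C * (‖z‖ / (C + 1)) < ‖z‖ := by
      have h1 : C * (‖z‖ / (C + 1)) < (C + 1) * (‖z‖ / (C + 1)) :=
        mul_lt_mul_of_pos_right (lt_add_one C) hepos
      have h2 : (C + 1) * (‖z‖ / (C + 1)) = ‖z‖ := by field_simp
      linarith
    exact absurd (hbound.trans_lt hfin) (lt_irrefl _)
end

section
/- Let A be a C*-algebra such that for every C*-algebra B, every bounded linear orthogonality preserving map T : A → B is completely orthogonality preserving. Then A is commutative. -/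
noncomputable section CopAux

variable {A : Type u} [NonUnitalCStarAlgebra A]

namespace CopAux

instance instStarRingOp : StarRing Aᵐᵒᵖ where
  star_involutive r := MulOpposite.unop_injective (star_star _)
  star_mul x y := MulOpposite.unop_injective (star_mul _ _)
  star_add x y := MulOpposite.unop_injective (star_add _ _)

instance instCStarRingOp : CStarRing Aᵐᵒᵖ where
  norm_mul_self_le x := by
    have h1 : star x * x = MulOpposite.op (x.unop * star x.unop) := rfl
    have h2 : ‖x‖ = ‖x.unop‖ := rfl
    rw [h1, h2]
    have : ‖MulOpposite.op (x.unop * star x.unop)‖ = ‖x.unop * star x.unop‖ := rfl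
    rw [this, CStarRing.norm_self_mul_star]

instance instStarModuleOp : StarModule ℂ Aᵐᵒᵖ where
  star_smul c x := MulOpposite.unop_injective (star_smul c x.unop)

instance instNonUnitalCStarAlgebraOp : NonUnitalCStarAlgebra Aᵐᵒᵖ where

end CopAux

end CopAux

/-- If `A` is a C*-algebra such that for every C*-algebra `B`,
every bounded linear orthogonality preserving map `T : A → B` is completely
orthogonality preserving, then `A` is commutative. -/
theorem commutative_of_every_op_is_cop
    {A : Type u} [NonUnitalCStarAlgebra A]
    (h : ∀ (B : Type u) [NonUnitalCStarAlgebra B] (T : A →L[ℂ] B),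
      (∀ a b : A, a * star b = 0 ∧ star b * a = 0 →
        T a * star (T b) = 0 ∧ star (T b) * T a = 0) →
      ∀ (n : ℕ), 1 ≤ n → ∀ x y : Matrix (Fin n) (Fin n) A,
        x * star y = 0 ∧ star y * x = 0 →
          x.map ⇑T * star (y.map ⇑T) = 0 ∧ star (y.map ⇑T) * x.map ⇑T = 0) :
    ∀ a b : A, a * b = b * a := by
  classical
  -- The opposite map `op : A → Aᵐᵒᵖ` as a continuous linear map.
  set T : A →L[ℂ] Aᵐᵒᵖ :=
    (MulOpposite.opContinuousLinearEquiv (M := A) (R := ℂ)).toContinuousLinearMap with hT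
  have hTapp : ∀ a : A, T a = MulOpposite.op a := fun a => rfl
  -- `T` is orthogonality preserving.
  have hOP : ∀ a b : A, a * star b = 0 ∧ star b * a = 0 →
      T a * star (T b) = 0 ∧ star (T b) * T a = 0 := by
    intro a b ⟨h1, h2⟩
    constructor
    · have : T a * star (T b) = MulOpposite.op (star b * a) := rfl
      rw [this, h2, MulOpposite.op_zero]
    · have : star (T b) * T a = MulOpposite.op (a * star b) := rfl
      rw [this, h1, MulOpposite.op_zero]
  -- Key reversal lemma: if `p * u + q * v = 0`, then `u * p + v * q = 0`.
  have key : ∀ p q u v : A, p * u + q * v = 0 → u * p + v * q = 0 := by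
    intro p q u v hpq
    set x : Matrix (Fin 2) (Fin 2) A := !![p, q; 0, 0] with hx
    set y : Matrix (Fin 2) (Fin 2) A := !![0, 0; star u, star v] with hy
    have hortho : x * star y = 0 ∧ star y * x = 0 := by
      constructor
      · ext i j
        fin_cases i <;> fin_cases j <;>
          simp [hx, hy, Matrix.mul_apply, Fin.sum_univ_two, Matrix.star_apply, hpq]
      · ext i j
        fin_cases i <;> fin_cases j <;>
          simp [hx, hy, Matrix.mul_apply, Fin.sum_univ_two, Matrix.star_apply]
    have hconc := (h Aᵐᵒᵖ T hOP 2 (by norm_num) x y hortho).1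
    have hentry : (x.map ⇑T * star (y.map ⇑T)) 0 1 = 0 := by rw [hconc]; rfl
    rw [Matrix.mul_apply, Fin.sum_univ_two] at hentry
    simp only [Matrix.star_apply] at hentry
    have hexp : (x.map ⇑T) 0 0 * star ((y.map ⇑T) 1 0)
        + (x.map ⇑T) 0 1 * star ((y.map ⇑T) 1 1)
        = MulOpposite.op (u * p + v * q) := by
      simp only [hx, hy, Matrix.map_apply, hTapp]
      show MulOpposite.op p * star (MulOpposite.op (star u))
          + MulOpposite.op q * star (MulOpposite.op (star v))
        = MulOpposite.op (u * p + v * q)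
      rw [← MulOpposite.op_star, star_star, ← MulOpposite.op_star, star_star]
      rw [← MulOpposite.op_mul, ← MulOpposite.op_mul, ← MulOpposite.op_add]
    rw [hexp] at hentry
    exact MulOpposite.op_injective (by simpa using hentry)
  -- Squares are central.
  have sq_central : ∀ a w : A, (a * a) * w = w * (a * a) := by
    intro a w
    have e1 : a * w * a = w * (a * a) := by
      have h1 := key a (-(a * a)) (a * w) w (by noncomm_ring)
      simp only [mul_neg, neg_mul, ← sub_eq_add_neg, sub_eq_zero] at h1
      simpa using h1
    have e2 : a * (w * a) = a * a * w := by
      have h2 := key (w * a) w a (-(a * a)) (by noncomm_ring)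
      simp only [mul_neg, neg_mul, ← sub_eq_add_neg, sub_eq_zero] at h2
      simpa using h2
    rw [← e2, ← mul_assoc]
    exact e1
  -- Selfadjoint elements are central: write them as a difference of squares via the
  -- nonunital continuous functional calculus.
  have sa_central : ∀ x w : A, IsSelfAdjoint x → x * w = w * x := by
    intro x w hx
    set f : ℝ → ℝ := fun r => Real.sqrt (max r 0) with hfdef
    set g : ℝ → ℝ := fun r => Real.sqrt (max (-r) 0) with hgdef
    have hfc : Continuous f := Real.continuous_sqrt.comp (continuous_id.max continuous_const)
    have hgc : Continuous g := Real.continuous_sqrt.comp (continuous_neg.max continuous_const)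
    have hf0 : f 0 = 0 := by simp [hfdef]
    have hg0 : g 0 = 0 := by simp [hgdef]
    have hff : (fun r : ℝ => f r * f r - g r * g r) = fun r : ℝ => r := by
      funext r
      simp only [hfdef, hgdef]
      rw [Real.mul_self_sqrt (le_max_right r 0), Real.mul_self_sqrt (le_max_right (-r) 0)]
      exact max_zero_sub_max_neg_zero_eq_self r
    have hx' : x = cfcₙ f x * cfcₙ f x - cfcₙ g x * cfcₙ g x := by
      calc x = cfcₙ (fun r : ℝ => r) x := (cfcₙ_id' ℝ x hx).symm
        _ = cfcₙ (fun r : ℝ => f r * f r - g r * g r) x := by rw [hff]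
        _ = cfcₙ (fun r : ℝ => f r * f r) x - cfcₙ (fun r : ℝ => g r * g r) x :=
            cfcₙ_sub _ _ x ((hfc.mul hfc).continuousOn) (by simp [hf0])
              ((hgc.mul hgc).continuousOn) (by simp [hg0])
        _ = cfcₙ f x * cfcₙ f x - cfcₙ g x * cfcₙ g x := by
            rw [cfcₙ_mul f f x hfc.continuousOn hf0 hfc.continuousOn hf0,
              cfcₙ_mul g g x hgc.continuousOn hg0 hgc.continuousOn hg0]
    rw [hx', sub_mul, mul_sub, sq_central (cfcₙ f x) w, sq_central (cfcₙ g x) w]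
  -- Conclude.
  intro a b
  set s : A := a + star a with hs
  set t : A := Complex.I • (a - star a) with ht
  have hssa : IsSelfAdjoint s := IsSelfAdjoint.add_star_self a
  have htsa : IsSelfAdjoint t := by
    rw [IsSelfAdjoint, ht, star_smul, star_sub, star_star, Complex.star_def, Complex.conj_I]
    module
  have hsum : s + (-Complex.I) • t = (2 : ℂ) • a := by
    rw [hs, ht, smul_smul]
    have : (-Complex.I) * Complex.I = 1 := by
      rw [neg_mul, Complex.I_mul_I, neg_neg]
    rw [this, one_smul, two_smul]
    abel
  have h2ab : (2 : ℂ) • (a * b) = (2 : ℂ) • (b * a) := by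
    have hmain : ((2 : ℂ) • a) * b = b * ((2 : ℂ) • a) := by
      rw [← hsum, add_mul, mul_add, smul_mul_assoc, mul_smul_comm,
        sa_central s b hssa, sa_central t b htsa]
    rw [smul_mul_assoc, mul_smul_comm] at hmain
    exact hmain
  have := congrArg (fun z => ((2 : ℂ)⁻¹) • z) h2ab
  simpa [smul_smul] using this
end

section
/- Let A be a complex associative *-algebra and let p be a seminorm on A satisfying p(a b* c) ≤ p(a) p(b*) p(c) for all a, b, c ∈ A and p(a a* a) = p(a)³ for all a ∈ A. Then p(a*) = p(a) and p(a a*) = p(a)² for all a ∈ A; in particular p is a C*-seminorm. -/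
open scoped NNReal

/-! From `p a ^ 3 = p (a a* a) ≤ p a ^ 2 p (a*)` one gets `p a ≤ p (a*)`, hence equality. With `w = a a* a` and `x = a a*`, splitting the words
`x x* x = w a* x` and `w w* w = x (w a* a) (a* a)` into three factors bounds `p x` above and below
by `p a ^ 2`. Submultiplicativity then follows from `p (a b) ^ 2 = p (a (b b*) a*)`. -/

theorem NNReal.pow_le_of_pow_add_le_mul_pow {x y : ℝ≥0} {m n : ℕ} (hm : m ≠ 0)
    (h : x ^ (m + n) ≤ y * x ^ n) : x ^ m ≤ y := by
  rcases eq_zero_or_pos x with rfl | hx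
  · simp [zero_pow hm]
  · rw [pow_add] at h
    exact le_of_mul_le_mul_right h (pow_pos hx n)

section TripleSeminorm

variable {A : Type*} [Semigroup A] [StarMul A] {p : A → ℝ≥0}

theorem apply_le_apply_star (hmul : ∀ a b c : A, p (a * b * c) ≤ p a * p b * p c)
    (hcube : ∀ a : A, p (a * star a * a) = p a ^ 3) (a : A) : p a ≤ p (star a) := by
  have h : p a ^ (1 + 2) ≤ p (star a) * p a ^ 2 :=
    calc p a ^ (1 + 2) = p (a * star a * a) := (hcube a).symm
      _ ≤ p a * p (star a) * p a := hmul _ _ _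
      _ = p (star a) * p a ^ 2 := by ring
  simpa using NNReal.pow_le_of_pow_add_le_mul_pow one_ne_zero h

theorem apply_star_eq (hmul : ∀ a b c : A, p (a * b * c) ≤ p a * p b * p c)
    (hcube : ∀ a : A, p (a * star a * a) = p a ^ 3) (a : A) : p (star a) = p a :=
  le_antisymm (by simpa using apply_le_apply_star hmul hcube (star a))
    (apply_le_apply_star hmul hcube a)

theorem apply_mul_star_le_sq (hmul : ∀ a b c : A, p (a * b * c) ≤ p a * p b * p c)
    (hcube : ∀ a : A, p (a * star a * a) = p a ^ 3) (a : A) : p (a * star a) ≤ p a ^ 2 := by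
  have hsq : p (a * star a) ^ 2 ≤ (p a ^ 2) ^ 2 := by
    refine NNReal.pow_le_of_pow_add_le_mul_pow (n := 1) two_ne_zero ?_
    calc p (a * star a) ^ (2 + 1) = p (a * star a * star (a * star a) * (a * star a)) :=
          (hcube _).symm
      _ = p ((a * star a * a) * star a * (a * star a)) := by
          simp only [star_mul, star_star, mul_assoc]
      _ ≤ p (a * star a * a) * p (star a) * p (a * star a) := hmul _ _ _
      _ = (p a ^ 2) ^ 2 * p (a * star a) ^ 1 := by
          rw [hcube, apply_star_eq hmul hcube]; ring
  exact (pow_le_pow_iff_left₀ zero_le zero_le two_ne_zero).mp hsq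

theorem sq_le_apply_mul_star (hmul : ∀ a b c : A, p (a * b * c) ≤ p a * p b * p c)
    (hcube : ∀ a : A, p (a * star a * a) = p a ^ 3) (a : A) : p a ^ 2 ≤ p (a * star a) := by
  have hmid : p (a * star a * a * star a * a) ≤ p a ^ 5 := by
    calc p (a * star a * a * star a * a) ≤ p (a * star a * a) * p (star a) * p a := hmul _ _ _
      _ = p a ^ 5 := by rw [hcube, apply_star_eq hmul hcube]; ring
  have hlast : p (star a * a) ≤ p a ^ 2 := by
    simpa [apply_star_eq hmul hcube] using apply_mul_star_le_sq hmul hcube (star a)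
  refine NNReal.pow_le_of_pow_add_le_mul_pow (n := 7) two_ne_zero ?_
  calc p a ^ (2 + 7) = p (a * star a * a * star (a * star a * a) * (a * star a * a)) := by
        rw [hcube, hcube]; ring
    _ = p (a * star a * (a * star a * a * star a * a) * (star a * a)) := by
        simp only [star_mul, star_star, mul_assoc]
    _ ≤ p (a * star a) * p (a * star a * a * star a * a) * p (star a * a) := hmul _ _ _
    _ ≤ p (a * star a) * p a ^ 5 * p a ^ 2 := by gcongr
    _ = p (a * star a) * p a ^ 7 := by ring

theorem apply_mul_star_eq_sq (hmul : ∀ a b c : A, p (a * b * c) ≤ p a * p b * p c)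
    (hcube : ∀ a : A, p (a * star a * a) = p a ^ 3) (a : A) : p (a * star a) = p a ^ 2 :=
  le_antisymm (apply_mul_star_le_sq hmul hcube a) (sq_le_apply_mul_star hmul hcube a)

theorem apply_star_mul_eq_sq (hmul : ∀ a b c : A, p (a * b * c) ≤ p a * p b * p c)
    (hcube : ∀ a : A, p (a * star a * a) = p a ^ 3) (a : A) : p (star a * a) = p a ^ 2 := by
  simpa [apply_star_eq hmul hcube] using apply_mul_star_eq_sq hmul hcube (star a)

theorem apply_mul_le (hmul : ∀ a b c : A, p (a * b * c) ≤ p a * p b * p c)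
    (hcube : ∀ a : A, p (a * star a * a) = p a ^ 3) (a b : A) : p (a * b) ≤ p a * p b := by
  refine (pow_le_pow_iff_left₀ zero_le zero_le two_ne_zero).mp ?_
  calc p (a * b) ^ 2 = p (a * b * star (a * b)) := (apply_mul_star_eq_sq hmul hcube _).symm
    _ = p (a * (b * star b) * star a) := by simp only [star_mul, mul_assoc]
    _ ≤ p a * p (b * star b) * p (star a) := hmul _ _ _
    _ = (p a * p b) ^ 2 := by
        rw [apply_mul_star_eq_sq hmul hcube, apply_star_eq hmul hcube]; ring

end TripleSeminorm

theorem seminorm_is_cstar_seminorm_general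
    {A : Type*} [NonUnitalRing A] [StarRing A]
    (p : A → ℝ≥0)
    (htriple : ∀ a b c : A, p (a * star b * c) ≤ p a * p (star b) * p c)
    (hcube : ∀ a : A, p (a * star a * a) = p a ^ 3) :
    (∀ a : A, p (star a) = p a) ∧
    (∀ a : A, p (a * star a) = p a ^ 2) ∧
    (∀ a b : A, p (a * b) ≤ p a * p b) ∧
    (∀ a : A, p (star a * a) = p a ^ 2) := by
  have hmul : ∀ a b c : A, p (a * b * c) ≤ p a * p b * p c := fun a b c => by
    simpa using htriple a (star b) c
  exact ⟨apply_star_eq hmul hcube, apply_mul_star_eq_sq hmul hcube, apply_mul_le hmul hcube,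
    apply_star_mul_eq_sq hmul hcube⟩

/-- If `p` is a seminorm on a complex associative `*`-algebra `A`
satisfying `p (a b* c) ≤ p a * p b* * p c` and `p (a a* a) = p a ^ 3`, then
`p (a*) = p a` and `p (a a*) = p a ^ 2` for all `a`; in particular `p` is a
C*-seminorm (it is submultiplicative and satisfies the C*-identity). -/
theorem seminorm_is_cstar_seminorm
    {A : Type*} [NonUnitalRing A] [StarRing A] [Module ℂ A] [StarModule ℂ A]
    (p : A → ℝ≥0)
    (hsmul : ∀ (c : ℂ) (a : A), p (c • a) = ‖c‖₊ * p a)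
    (htri : ∀ a b : A, p (a + b) ≤ p a + p b)
    (htriple : ∀ a b c : A, p (a * star b * c) ≤ p a * p (star b) * p c)
    (hcube : ∀ a : A, p (a * star a * a) = p a ^ 3) :
    (∀ a : A, p (star a) = p a) ∧
    (∀ a : A, p (a * star a) = p a ^ 2) ∧
    (∀ a b : A, p (a * b) ≤ p a * p b) ∧
    (∀ a : A, p (star a * a) = p a ^ 2) :=
  seminorm_is_cstar_seminorm_general p htriple hcube
end
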